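/- Let G = Fₙ × ℤ^m be the direct product of a free group of finite rank n with ℤ^m, and let H be a finitely generated subgroup of G. Let Hπ ≤ Fₙ be the projection of H to the free factor and L_H = H ∩ ({1} × ℤ^m), viewed as a subgroup of ℤ^m. Then the spectrum of G with respect to H satisfies Ord_H(G) ⊆ Ord_{Hπ}(Fₙ) · Ord_{L_H}(ℤ^m) (every relative order in H is a product r·s with r ∈ Ord_{Hπ}(Fₙ) and s ∈ Ord_{L_H}(ℤ^m)); in particular, Ord_H(G) is bounded. -/

import Mathlib

/-!
Write `g = (x, a)` and let `r = Ord_{Hπ}(x)`, realized by some `(x ^ r, b) ∈ H`. Then `g ^ k ∈ H`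
exactly when `k = r * j` with `(a ^ r * b⁻¹) ^ j ∈ L_H`, which gives the factorization. Relative
orders in `L_H ≤ ℤ^m` are orders in the finitely generated abelian group `ℤ^m ⧸ L_H`, bounded by
the size of its finite torsion subgroup. In the free group, a finitely generated subgroup `K` is
quasiconvex; the prefixes `x ^ i * u` (`i < Ord_K(x)`, `u` the conjugator of the cyclic reduction of
`x`) of the reduced word of `x ^ Ord_K(x)` lie in pairwise distinct cosets of `K`, each meeting the
ball whose radius is the length of the longest generator of `K`.
-/

/-- The relative order of `g` in the subgroup `H`: the least `k ≥ 1` with `g ^ k ∈ H`,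
and `0` if no such `k` exists. -/
noncomputable def relOrd {G : Type*} [Group G] (H : Subgroup G) (g : G) : ℕ :=
  sInf {k : ℕ | 1 ≤ k ∧ g ^ k ∈ H}

section relOrd

variable {G : Type*} [Group G] (H : Subgroup G) (g : G)

theorem relOrd_le_of_pow_mem {k : ℕ} (hk : 0 < k) (h : g ^ k ∈ H) : relOrd H g ≤ k :=
  Nat.sInf_le (show k ∈ {k : ℕ | 1 ≤ k ∧ g ^ k ∈ H} from ⟨hk, h⟩)

theorem relOrd_pos_of_pow_mem {k : ℕ} (hk : 0 < k) (h : g ^ k ∈ H) : 0 < relOrd H g :=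
  (Nat.sInf_mem (s := {k : ℕ | 1 ≤ k ∧ g ^ k ∈ H}) ⟨k, hk, h⟩).1

theorem pow_relOrd_mem : g ^ relOrd H g ∈ H := by
  by_cases h : {k : ℕ | 1 ≤ k ∧ g ^ k ∈ H}.Nonempty
  · exact (Nat.sInf_mem h).2
  · rw [relOrd, Set.not_nonempty_iff_eq_empty.1 h, Nat.sInf_empty, pow_zero]
    exact H.one_mem

theorem relOrd_dvd_iff_pow_mem {k : ℕ} : relOrd H g ∣ k ↔ g ^ k ∈ H := by
  refine ⟨fun ⟨t, ht⟩ => by rw [ht, pow_mul]; exact pow_mem (pow_relOrd_mem H g) t, fun hk => ?_⟩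
  have hmod : g ^ (k % relOrd H g) ∈ H := by
    rw [← Nat.div_add_mod k (relOrd H g), pow_add, pow_mul] at hk
    exact (H.mul_mem_cancel_left (pow_mem (pow_relOrd_mem H g) _)).1 hk
  refine Nat.dvd_of_mod_eq_zero (Nat.eq_zero_of_not_pos fun hpos => ?_)
  have hlt := Nat.mod_lt k (relOrd_pos_of_pow_mem H g hpos hmod)
  exact (relOrd_le_of_pow_mem H g hpos hmod).not_gt hlt

theorem relOrd_eq_of_forall_dvd_iff {d : ℕ} (h : ∀ k, d ∣ k ↔ g ^ k ∈ H) : relOrd H g = d :=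
  Nat.dvd_right_iff_eq.1 fun k => (relOrd_dvd_iff_pow_mem H g).trans (h k).symm

theorem relOrd_eq_orderOf_mk [H.Normal] : relOrd H g = orderOf (g : G ⧸ H) :=
  relOrd_eq_of_forall_dvd_iff H g fun k => by
    rw [orderOf_dvd_iff_pow_eq_one, ← QuotientGroup.mk_pow, QuotientGroup.eq_one_iff]

theorem relOrd_le_card_of_forall_exists_mul_pow_inv_mem {S : Finset G}
    (hS : ∀ i < relOrd H g, ∃ s ∈ S, s * (g ^ i)⁻¹ ∈ H) : relOrd H g ≤ S.card := by
  by_contra! hlt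
  choose! s hsS hsH using hS
  have hne : ∀ i j, i < j → j < relOrd H g → s i ≠ s j := by
    intro i j hij hj heq
    have hmem : g ^ (j - i) ∈ H := by
      have := H.mul_mem (H.inv_mem (hsH j hj)) (hsH i (hij.trans hj))
      rwa [heq, mul_inv_rev, inv_inv, mul_assoc, inv_mul_cancel_left, ← pow_sub g hij.le] at this
    exact (relOrd_le_of_pow_mem H g (Nat.sub_pos_of_lt hij) hmem).not_gt (by omega)
  obtain ⟨i, hi, j, hj, hij, heq⟩ := Finset.exists_ne_map_eq_of_card_lt_of_maps_to
    (s := Finset.range (relOrd H g)) (by simpa using hlt)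
    (fun i hi => hsS i (Finset.mem_range.1 hi))
  rw [Finset.mem_range] at hi hj
  rcases hij.lt_or_gt with h | h
  · exact hne i j h hj heq
  · exact hne j i h hi heq.symm

end relOrd

theorem relOrd_prod_eq_mul {G A : Type*} [Group G] [CommGroup A] (H : Subgroup (G × A))
    (g : G × A) : ∃ c : A, relOrd H g =
      relOrd (H.map (MonoidHom.fst G A)) g.1 * relOrd (H.comap (MonoidHom.inr G A)) c := by
  obtain ⟨x, a⟩ := g
  set r := relOrd (H.map (MonoidHom.fst G A)) x
  obtain ⟨⟨y, b⟩, hyb, rfl : y = x ^ r⟩ := pow_relOrd_mem (H.map (MonoidHom.fst G A)) x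
  refine ⟨a ^ r * b⁻¹, relOrd_eq_of_forall_dvd_iff H _ fun k => ?_⟩
  have hsplit (j : ℕ) :
      (x, a) ^ (r * j) ∈ H ↔ (a ^ r * b⁻¹) ^ j ∈ H.comap (MonoidHom.inr G A) := by
    have hfactor : (x, a) ^ (r * j) = (x ^ r, b) ^ j * (1, (a ^ r * b⁻¹) ^ j) := by
      ext
      · simp [pow_mul]
      · simp [pow_mul, mul_pow]
    rw [hfactor, H.mul_mem_cancel_left (pow_mem hyb j)]
    rfl
  constructor
  · rintro ⟨j, rfl⟩
    rw [mul_assoc, hsplit, ← relOrd_dvd_iff_pow_mem]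
    exact dvd_mul_right _ _
  · intro hk
    obtain ⟨j, rfl⟩ : r ∣ k := (relOrd_dvd_iff_pow_mem _ _).2 ⟨_, hk, by simp⟩
    exact mul_dvd_mul_left r ((relOrd_dvd_iff_pow_mem _ _).2 ((hsplit j).1 hk))

theorem CommGroup.exists_forall_relOrd_le {A : Type*} [CommGroup A] [Group.FG A]
    (L : Subgroup A) : ∃ N : ℕ, ∀ a : A, relOrd L a ≤ N := by
  let T := Submodule.torsion ℤ (Additive (A ⧸ L))
  have : Module.Finite ℤ (Additive (A ⧸ L)) := Module.Finite.iff_addGroup_fg.mpr inferInstance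
  have : Finite T := Module.finite_of_fg_torsion T Submodule.torsion_isTorsion
  refine ⟨Nat.card T, fun a => ?_⟩
  rw [relOrd_eq_orderOf_mk]
  by_cases h : IsOfFinOrder (a : A ⧸ L)
  · have hT : Additive.ofMul (a : A ⧸ L) ∈ T := by
      rw [← Submodule.mem_toAddSubgroup, Submodule.torsion_int]
      exact isOfFinAddOrder_ofMul_iff.2 h
    calc orderOf (a : A ⧸ L) = addOrderOf (⟨_, hT⟩ : T) := by
          rw [← addOrderOf_ofMul_eq_orderOf,
            ← addOrderOf_injective T.subtype.toAddMonoidHom Subtype.val_injective]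
          rfl
      _ ≤ Nat.card T := addOrderOf_le_card
  · rw [orderOf_eq_zero h]
    exact Nat.zero_le _

theorem Subgroup.FG.map {G G' : Type*} [Group G] [Group G'] {H : Subgroup G} (hH : H.FG)
    (f : G →* G') : (H.map f).FG := by
  classical
  obtain ⟨S, rfl⟩ := hH
  exact ⟨S.image f, by rw [Finset.coe_image, MonoidHom.map_closure]⟩

namespace FreeGroup

open reduceCyclically

variable {α : Type*}

section DecidableEq

variable [DecidableEq α]

theorem IsReduced.exists_reduce_append {X Y : List (α × Bool)}
    (hX : IsReduced X) (hY : IsReduced Y) :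
    ∃ A C B, X = A ++ C ∧ Y = invRev C ++ B ∧ reduce (X ++ Y) = A ++ B := by
  induction X using List.reverseRecOn generalizing Y with
  | nil => exact ⟨[], [], Y, rfl, rfl, hY.reduce_eq⟩
  | append_singleton X x ih =>
    cases Y with
    | nil => exact ⟨X ++ [x], [], [], by simp, rfl, by simpa using hX.reduce_eq⟩
    | cons y Y =>
      by_cases hxy : y = (x.1, !x.2)
      · obtain ⟨A, C, B, rfl, rfl, hAB⟩ := ih (hX.infix ⟨[], [x], rfl⟩) hY.tail
        refine ⟨A, C ++ [x], B, by simp, by simp [hxy, invRev], ?_⟩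
        rw [← hAB, hxy]
        simpa using reduce.Step.eq (Red.Step.not (L₁ := A ++ C) (L₂ := invRev C ++ B)
          (x := x.1) (b := x.2))
      · refine ⟨X ++ [x], [], y :: Y, by simp, rfl, IsReduced.reduce_eq ?_⟩
        refine List.IsChain.append hX hY fun a ha b hb hab => ?_
        simp only [List.getLast?_append, List.getLast?_singleton, Option.some_or,
          Option.mem_def, Option.some.injEq, List.head?_cons] at ha hb
        subst ha hb
        by_contra h
        exact hxy (Prod.ext hab.symm (Bool.eq_not_iff.2 (Ne.symm h)))

theorem toWord_mk_of_prefix {L : List (α × Bool)} {x : FreeGroup α} (h : L <+: x.toWord) :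
    (mk L).toWord = L := by
  rw [toWord_mk, (isReduced_toWord.infix h.isInfix).reduce_eq]

theorem toWord_prefix_or_inv_mul_toWord_prefix {p a b : FreeGroup α}
    (h : p.toWord <+: (a * b).toWord) : p.toWord <+: a.toWord ∨ (a⁻¹ * p).toWord <+: b.toWord := by
  obtain ⟨A, C, B, ha, hb, hab⟩ :=
    (isReduced_toWord (x := a)).exists_reduce_append (isReduced_toWord (x := b))
  rw [toWord_mul, hab] at h
  rcases le_total p.toWord.length A.length with hle | hle
  · left
    rw [ha]
    exact (List.prefix_of_prefix_length_le h (List.prefix_append A B) hle).trans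
      (List.prefix_append A C)
  · right
    obtain ⟨P, hP⟩ := List.prefix_of_prefix_length_le (List.prefix_append A B) h hle
    have hPB : invRev C ++ P <+: b.toWord := by
      rw [hb]
      exact (List.prefix_append_right_inj _).2 ((List.prefix_append_right_inj A).1 (hP ▸ h))
    have hinv : a⁻¹ * p = mk (invRev C ++ P) := by
      rw [← mk_toWord (x := a), ← mk_toWord (x := p), ha, ← hP, ← mul_mk, ← mul_mk, ← mul_mk,
        ← inv_mk]
      group
    rw [hinv, toWord_mk_of_prefix hPB]
    exact hPB

theorem exists_mem_closure_norm_inv_mul_le {T : Set (FreeGroup α)} {M : ℕ}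
    (hT : ∀ t ∈ T, norm t ≤ M) {w : FreeGroup α} (hw : w ∈ Subgroup.closure T) :
    ∀ p : FreeGroup α, p.toWord <+: w.toWord →
      ∃ v ∈ Subgroup.closure T, norm (v⁻¹ * p) ≤ M := by
  have step : ∀ s ∈ Subgroup.closure T, norm s ≤ M → ∀ y : FreeGroup α,
      (∀ p : FreeGroup α, p.toWord <+: y.toWord → ∃ v ∈ Subgroup.closure T, norm (v⁻¹ * p) ≤ M) →
      ∀ p : FreeGroup α, p.toWord <+: (s * y).toWord →
        ∃ v ∈ Subgroup.closure T, norm (v⁻¹ * p) ≤ M := by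
    intro s hs hsM y ih p hp
    rcases toWord_prefix_or_inv_mul_toWord_prefix hp with hps | hpy
    · exact ⟨1, one_mem _, by rw [inv_one, one_mul]; exact hps.length_le.trans hsM⟩
    · obtain ⟨v, hv, hvM⟩ := ih _ hpy
      exact ⟨s * v, mul_mem hs hv, by rwa [mul_inv_rev, mul_assoc]⟩
  induction hw using Subgroup.closure_induction_left with
  | one =>
    intro p hp
    rw [toWord_one, List.prefix_nil, toWord_eq_nil_iff] at hp
    exact ⟨1, one_mem _, by simp [hp]⟩
  | mul_left s hs y _ ih => exact step s (Subgroup.subset_closure hs) (hT s hs) y ih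
  | inv_mul_cancel s hs y _ ih =>
    exact step s⁻¹ (inv_mem (Subgroup.subset_closure hs)) (norm_inv_eq.trans_le (hT s hs)) y ih

/-- With `x = u t u⁻¹` and `t` cyclically reduced, the reduced word of `x ^ k` is `u t ^ k u⁻¹`
without cancellation, so `x ^ i * u = u t ^ i` is a prefix of it. -/
theorem toWord_pow_mul_conjugator_prefix (x : FreeGroup α) {i k : ℕ} (hik : i ≤ k)
    (hk : k ≠ 0) : (x ^ i * mk (conjugator x.toWord)).toWord <+: (x ^ k).toWord := by
  set U := conjugator x.toWord
  set R := reduceCyclically x.toWord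
  have hx : x = mk U * mk R * (mk U)⁻¹ := by
    rw [inv_mk, mul_mk, mul_mk, conj_conjugator_reduceCyclically, mk_toWord]
  have hpow : x ^ i * mk U = mk (U ++ (List.replicate i R).flatten) := by
    rw [hx, conj_pow, inv_mul_cancel_right, pow_mk, mul_mk]
  have hprefix : U ++ (List.replicate i R).flatten <+: (x ^ k).toWord := by
    rw [toWord_pow, reduce_flatten_replicate isReduced_toWord, if_neg hk, List.append_assoc,
      ← Nat.add_sub_cancel' hik, List.replicate_add, List.flatten_append, List.append_assoc]
    exact (List.prefix_append_right_inj U).2 (List.prefix_append _ _)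
  rwa [hpow, toWord_mk_of_prefix hprefix]

theorem finite_setOf_norm_le [Finite α] (M : ℕ) : {x : FreeGroup α | norm x ≤ M}.Finite :=
  (List.finite_length_le _ M).preimage toWord_injective.injOn

end DecidableEq

theorem exists_forall_relOrd_le [Finite α] {K : Subgroup (FreeGroup α)} (hK : K.FG) :
    ∃ N : ℕ, ∀ x : FreeGroup α, relOrd K x ≤ N := by
  classical
  obtain ⟨T, rfl⟩ := hK
  set B := (finite_setOf_norm_le (α := α) (T.sup norm)).toFinset
  refine ⟨B.card, fun x => ?_⟩
  rcases Nat.eq_zero_or_pos (relOrd (Subgroup.closure ↑T) x) with h0 | hpos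
  · exact h0 ▸ Nat.zero_le _
  set u := mk (conjugator x.toWord)
  refine (relOrd_le_card_of_forall_exists_mul_pow_inv_mem _ x (S := B.image (· * u⁻¹))
    fun i hi => ?_).trans Finset.card_image_le
  obtain ⟨v, hv, hvB⟩ := exists_mem_closure_norm_inv_mul_le (fun t ht => Finset.le_sup ht)
    (pow_relOrd_mem _ x) _ (toWord_pow_mul_conjugator_prefix x hi.le hpos.ne')
  refine ⟨v⁻¹ * x ^ i, Finset.mem_image.2 ⟨v⁻¹ * (x ^ i * u), by simpa [B] using hvB, by group⟩,
    by simpa using inv_mem hv⟩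

end FreeGroup

/-- In `G = Fₙ × ℤ^m`, for a finitely generated subgroup `H`, every relative order in `H` is a
product `r * s` with `r` a relative order in the projection `Hπ ≤ Fₙ` and `s` a relative order in
`L_H = H ∩ ({1} × ℤ^m) ≤ ℤ^m`; in particular the spectrum of `G` with respect to `H` is
bounded. -/
theorem spectrum_FTA_subset_product (n m : ℕ)
    (H : Subgroup (FreeGroup (Fin n) × Multiplicative (Fin m → ℤ))) (hH : H.FG) :
    (∀ g : FreeGroup (Fin n) × Multiplicative (Fin m → ℤ),
      ∃ r ∈ Set.range (relOrd
          (H.map (MonoidHom.fst (FreeGroup (Fin n)) (Multiplicative (Fin m → ℤ))))),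
        ∃ s ∈ Set.range (relOrd
          (H.comap (MonoidHom.inr (FreeGroup (Fin n)) (Multiplicative (Fin m → ℤ))))),
          relOrd H g = r * s) ∧
    ∃ N : ℕ, ∀ g : FreeGroup (Fin n) × Multiplicative (Fin m → ℤ), relOrd H g ≤ N := by
  obtain ⟨N₁, hN₁⟩ := FreeGroup.exists_forall_relOrd_le (hH.map (MonoidHom.fst _ _))
  obtain ⟨N₂, hN₂⟩ := CommGroup.exists_forall_relOrd_le (H.comap (MonoidHom.inr _ _))
  refine ⟨fun g => ?_, N₁ * N₂, fun g => ?_⟩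
  · obtain ⟨c, hc⟩ := relOrd_prod_eq_mul H g
    exact ⟨_, ⟨g.1, rfl⟩, _, ⟨c, rfl⟩, hc⟩
  · obtain ⟨c, hc⟩ := relOrd_prod_eq_mul H g
    exact hc ▸ Nat.mul_le_mul (hN₁ g.1) (hN₂ c)
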